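/- arXiv:1911.06375 — 6 statements merged into one kernel-verified Lean document; each statement's English description precedes it below -/
import Mathlib

section
/- Let p : ℝ^d → [1,∞) be measurable with 1 < p_- ≤ p_+ < ∞. Then the following are equivalent: (i) p(·) ∈ 𝒫^∞_{γ_d}(ℝ^d); (ii) there exists p_∞ > 1 and constants C₁, C₂ ≥ 1 such that C₁^{-1} ≤ e^{−|x|²(p(x)/p_∞ − 1)} ≤ C₁ and C₂^{-1} ≤ e^{−|x|²(p'(x)/p'_∞ − 1)} ≤ C₂ for all x ∈ ℝ^d, where p'(x) = p(x)/(p(x)−1) and p'_∞ = p_∞/(p_∞−1). Moreover, in the implication (i) ⇒ (ii) one may take C₁ = e^{C_{γ_d}/p_∞} and C₂ = e^{C_{γ_d}(p_-)'/p_∞}, where (p_-)' = p_- /(p_- − 1) and C_{γ_d} is the constant from condition (i). -/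
/-!
Multiplying condition (i) by `|x|²` turns it into the uniform bound `|x|² |p(x) - p_∞| ≤ C_{γ_d}`.
Both exponents in (ii) are `|x|² (p(x) - p_∞)` divided by a factor bounded away from `0` and `∞`:
`p_∞` for the first, and `(p(x) - 1) p_∞ ≥ (p_- - 1) p_∞` for the second, since
`p'(x)/p'_∞ - 1 = (p_∞ - p(x)) / ((p(x) - 1) p_∞)`. So (i) bounds both exponents, and conversely a
bound on the first exponent gives (i) back. That `p_∞ > 1` comes from `p_∞ ≥ p_-`, which holds
because `|p(x) - p_∞| ≥ p_- - p_∞` cannot decay if `p_∞ < p_-`.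
-/

open Real

lemma inv_le_exp_and_exp_le_iff_abs_le_log {t C : ℝ} (hC : 0 < C) :
    (C⁻¹ ≤ exp t ∧ exp t ≤ C) ↔ |t| ≤ log C := by
  rw [abs_le, ← log_inv, log_le_iff_le_exp (inv_pos.2 hC), le_log_iff_exp_le hC]

lemma inv_exp_le_exp_and_exp_le_exp_of_abs_le {t c : ℝ} (h : |t| ≤ c) :
    (exp c)⁻¹ ≤ exp t ∧ exp t ≤ exp c :=
  (inv_le_exp_and_exp_le_iff_abs_le_log (exp_pos c)).2 (by rwa [log_exp])

lemma abs_neg_mul_div_sub_one {r a b : ℝ} (hr : 0 ≤ r) (hb : 0 < b) :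
    |-r * (a / b - 1)| = r * |a - b| / b := by
  rw [show -r * (a / b - 1) = -(r * (a - b)) / b by field_simp, abs_div, abs_neg, abs_mul,
    abs_of_nonneg hr, abs_of_pos hb]

lemma conjExponent_div_conjExponent_sub_one {a b : ℝ} (ha : a ≠ 1) (hb : b ≠ 1) (hb₀ : b ≠ 0) :
    a.conjExponent / b.conjExponent - 1 = (b - a) / ((a - 1) * b) := by
  have ha' : a - 1 ≠ 0 := sub_ne_zero.2 ha
  have hb' : b - 1 ≠ 0 := sub_ne_zero.2 hb
  unfold Real.conjExponent
  field_simp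
  ring

lemma abs_neg_mul_conjExponent_div_sub_one {r a b : ℝ} (hr : 0 ≤ r) (ha : 1 < a) (hb : 1 < b) :
    |-r * (a.conjExponent / b.conjExponent - 1)| = r * |a - b| / ((a - 1) * b) := by
  have hden : 0 < (a - 1) * b := mul_pos (sub_pos.2 ha) (by linarith)
  rw [conjExponent_div_conjExponent_sub_one ha.ne' hb.ne' (by linarith), mul_div_assoc', abs_div,
    abs_of_pos hden, abs_mul, abs_neg, abs_of_nonneg hr, abs_sub_comm]

lemma abs_neg_mul_conjExponent_div_sub_one_le {r a b m C : ℝ} (hr : 0 ≤ r) (hm : 1 < m)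
    (hma : m ≤ a) (hb : 1 < b) (h : r * |a - b| ≤ C) :
    |-r * (a.conjExponent / b.conjExponent - 1)| ≤ C * m.conjExponent / b := by
  have hC : 0 ≤ C := (mul_nonneg hr (abs_nonneg _)).trans h
  have hb₀ : 0 < b := by linarith
  rw [abs_neg_mul_conjExponent_div_sub_one hr (hm.trans_le hma) hb]
  calc r * |a - b| / ((a - 1) * b)
      ≤ C / ((m - 1) * b) := by gcongr
    _ ≤ C * m / ((m - 1) * b) := by gcongr; exact le_mul_of_one_le_right hC hm.le
    _ = C * m.conjExponent / b := by unfold Real.conjExponent; field_simp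

section NormedSpace

variable {E : Type*} [NormedAddCommGroup E]

lemma sq_norm_mul_abs_sub_le {p : E → ℝ} {c C : ℝ} (hC : 0 ≤ C)
    (h : ∀ x, x ≠ 0 → |p x - c| ≤ C / ‖x‖ ^ 2) (x : E) :
    ‖x‖ ^ 2 * |p x - c| ≤ C := by
  rcases eq_or_ne x 0 with rfl | hx
  · simpa using hC
  · exact (le_div_iff₀' (by positivity)).1 (h x hx)

lemma le_of_forall_sq_norm_mul_abs_sub_le [NormedSpace ℝ E] [Nontrivial E] {p : E → ℝ}
    {m c C : ℝ} (hm : ∀ x, m ≤ p x) (h : ∀ x, ‖x‖ ^ 2 * |p x - c| ≤ C) : m ≤ c := by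
  by_contra! hcm
  have hε : 0 < m - c := sub_pos.2 hcm
  obtain ⟨x, hx⟩ := NormedSpace.exists_lt_norm ℝ E (C / (m - c) + 1)
  have hC : 0 ≤ C := (mul_nonneg (sq_nonneg _) (abs_nonneg _)).trans (h x)
  have hgap : m - c ≤ |p x - c| := (sub_le_sub_right (hm x) c).trans (le_abs_self _)
  have hsq : C / (m - c) < ‖x‖ ^ 2 := by nlinarith [div_nonneg hC hε.le]
  have := (h x).trans' (mul_le_mul_of_nonneg_left hgap (sq_nonneg ‖x‖))
  rw [div_lt_iff₀ hε] at hsq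
  linarith

lemma one_lt_of_abs_sub_le_div_sq_norm [NormedSpace ℝ E] [Nontrivial E] {p : E → ℝ}
    {m c C : ℝ} (hm₁ : 1 < m) (hm : ∀ x, m ≤ p x) (hC : 0 ≤ C)
    (h : ∀ x, x ≠ 0 → |p x - c| ≤ C / ‖x‖ ^ 2) : 1 < c :=
  hm₁.trans_le (le_of_forall_sq_norm_mul_abs_sub_le hm (sq_norm_mul_abs_sub_le hC h))

theorem exp_bounds_of_abs_sub_le_div_sq_norm [NormedSpace ℝ E] [Nontrivial E] {p : E → ℝ}
    {m c C : ℝ} (hm₁ : 1 < m) (hm : ∀ x, m ≤ p x) (hC : 0 ≤ C)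
    (h : ∀ x, x ≠ 0 → |p x - c| ≤ C / ‖x‖ ^ 2) (x : E) :
    ((exp (C / c))⁻¹ ≤ exp (-‖x‖ ^ 2 * (p x / c - 1)) ∧
        exp (-‖x‖ ^ 2 * (p x / c - 1)) ≤ exp (C / c)) ∧
      ((exp (C * m.conjExponent / c))⁻¹ ≤
          exp (-‖x‖ ^ 2 * ((p x).conjExponent / c.conjExponent - 1)) ∧
        exp (-‖x‖ ^ 2 * ((p x).conjExponent / c.conjExponent - 1)) ≤
          exp (C * m.conjExponent / c)) := by
  have hw := sq_norm_mul_abs_sub_le hC h x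
  have hc := one_lt_of_abs_sub_le_div_sq_norm hm₁ hm hC h
  refine ⟨inv_exp_le_exp_and_exp_le_exp_of_abs_le ?_,
    inv_exp_le_exp_and_exp_le_exp_of_abs_le
      (abs_neg_mul_conjExponent_div_sub_one_le (sq_nonneg _) hm₁ (hm x) hc hw)⟩
  rw [abs_neg_mul_div_sub_one (sq_nonneg _) (by linarith)]
  gcongr

end NormedSpace

theorem PgammaInf_equivalence_general (d : ℕ) (hd : 1 ≤ d)
    (p : EuclideanSpace ℝ (Fin d) → ℝ)
    (pm : ℝ) (hpm : 1 < pm) (hlo : ∀ x, pm ≤ p x) :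
    ((∃ Cγ pinf : ℝ, 0 < Cγ ∧ 1 ≤ pinf ∧
        ∀ x : EuclideanSpace ℝ (Fin d), x ≠ 0 → |p x - pinf| ≤ Cγ / ‖x‖ ^ 2) ↔
      (∃ pinf C₁ C₂ : ℝ, 1 < pinf ∧ 1 ≤ C₁ ∧ 1 ≤ C₂ ∧
        ∀ x : EuclideanSpace ℝ (Fin d),
          (C₁⁻¹ ≤ Real.exp (-‖x‖ ^ 2 * (p x / pinf - 1)) ∧
            Real.exp (-‖x‖ ^ 2 * (p x / pinf - 1)) ≤ C₁) ∧
          (C₂⁻¹ ≤ Real.exp (-‖x‖ ^ 2 *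
              ((p x / (p x - 1)) / (pinf / (pinf - 1)) - 1)) ∧
            Real.exp (-‖x‖ ^ 2 *
              ((p x / (p x - 1)) / (pinf / (pinf - 1)) - 1)) ≤ C₂)))
    ∧
    (∀ Cγ pinf : ℝ, 0 < Cγ → 1 ≤ pinf →
      (∀ x : EuclideanSpace ℝ (Fin d), x ≠ 0 → |p x - pinf| ≤ Cγ / ‖x‖ ^ 2) →
      ∀ x : EuclideanSpace ℝ (Fin d),
        ((Real.exp (Cγ / pinf))⁻¹ ≤ Real.exp (-‖x‖ ^ 2 * (p x / pinf - 1)) ∧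
          Real.exp (-‖x‖ ^ 2 * (p x / pinf - 1)) ≤ Real.exp (Cγ / pinf)) ∧
        ((Real.exp (Cγ * (pm / (pm - 1)) / pinf))⁻¹ ≤
            Real.exp (-‖x‖ ^ 2 * ((p x / (p x - 1)) / (pinf / (pinf - 1)) - 1)) ∧
          Real.exp (-‖x‖ ^ 2 * ((p x / (p x - 1)) / (pinf / (pinf - 1)) - 1)) ≤
            Real.exp (Cγ * (pm / (pm - 1)) / pinf))) := by
  have : Nonempty (Fin d) := ⟨⟨0, hd⟩⟩
  -- `Real.conjExponent q` unfolds to the `q / (q - 1)` of the statement.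
  have quant := fun Cγ pinf (hC : 0 < Cγ) (_ : 1 ≤ pinf) h ↦
    exp_bounds_of_abs_sub_le_div_sq_norm (c := pinf) hpm hlo hC.le h
  refine ⟨⟨?_, ?_⟩, quant⟩
  · rintro ⟨Cγ, pinf, hC, hp1, h⟩
    have hpinf₀ : 0 ≤ pinf := by linarith
    exact ⟨pinf, exp (Cγ / pinf), exp (Cγ * (pm / (pm - 1)) / pinf),
      one_lt_of_abs_sub_le_div_sq_norm hpm hlo hC.le h, one_le_exp (div_nonneg hC.le hpinf₀),
      one_le_exp (div_nonneg (mul_nonneg hC.le (div_nonneg (by linarith) (by linarith))) hpinf₀),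
      quant Cγ pinf hC hp1 h⟩
  rintro ⟨pinf, C₁, _, hp1, hC₁, -, H⟩
  have hpinf₀ : 0 < pinf := by linarith
  refine ⟨pinf * log C₁ + 1, pinf,
    add_pos_of_nonneg_of_pos (mul_nonneg hpinf₀.le (log_nonneg hC₁)) one_pos, hp1.le, fun x hx ↦ ?_⟩
  have hlog := (inv_le_exp_and_exp_le_iff_abs_le_log (by linarith)).1 (H x).1
  rw [abs_neg_mul_div_sub_one (sq_nonneg _) hpinf₀, div_le_iff₀ hpinf₀] at hlog
  rw [le_div_iff₀' (by positivity)]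
  linarith

/-- Lemma (characterization of `𝒫^∞_{γ_d}(ℝ^d)`): for `1 < p_- ≤ p_+ < ∞`, the condition
`p(·) ∈ 𝒫^∞_{γ_d}(ℝ^d)` is equivalent to the existence of `p_∞ > 1` and constants
`C₁, C₂ ≥ 1` with `C₁⁻¹ ≤ e^{-|x|²(p(x)/p_∞ - 1)} ≤ C₁` and
`C₂⁻¹ ≤ e^{-|x|²(p'(x)/p'_∞ - 1)} ≤ C₂` for all `x`.  Moreover, in the implication
(i) ⇒ (ii) one may take `C₁ = e^{C_{γ_d}/p_∞}` and `C₂ = e^{C_{γ_d}(p_-)'/p_∞}`. -/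
theorem PgammaInf_equivalence (d : ℕ) (hd : 1 ≤ d)
    (p : EuclideanSpace ℝ (Fin d) → ℝ) (hpmeas : Measurable p)
    (pm pP : ℝ) (hpm : 1 < pm) (hlo : ∀ x, pm ≤ p x) (hhi : ∀ x, p x ≤ pP) :
    ((∃ Cγ pinf : ℝ, 0 < Cγ ∧ 1 ≤ pinf ∧
        ∀ x : EuclideanSpace ℝ (Fin d), x ≠ 0 → |p x - pinf| ≤ Cγ / ‖x‖ ^ 2) ↔
      (∃ pinf C₁ C₂ : ℝ, 1 < pinf ∧ 1 ≤ C₁ ∧ 1 ≤ C₂ ∧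
        ∀ x : EuclideanSpace ℝ (Fin d),
          (C₁⁻¹ ≤ Real.exp (-‖x‖ ^ 2 * (p x / pinf - 1)) ∧
            Real.exp (-‖x‖ ^ 2 * (p x / pinf - 1)) ≤ C₁) ∧
          (C₂⁻¹ ≤ Real.exp (-‖x‖ ^ 2 *
              ((p x / (p x - 1)) / (pinf / (pinf - 1)) - 1)) ∧
            Real.exp (-‖x‖ ^ 2 *
              ((p x / (p x - 1)) / (pinf / (pinf - 1)) - 1)) ≤ C₂)))
    ∧
    (∀ Cγ pinf : ℝ, 0 < Cγ → 1 ≤ pinf →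
      (∀ x : EuclideanSpace ℝ (Fin d), x ≠ 0 → |p x - pinf| ≤ Cγ / ‖x‖ ^ 2) →
      ∀ x : EuclideanSpace ℝ (Fin d),
        ((Real.exp (Cγ / pinf))⁻¹ ≤ Real.exp (-‖x‖ ^ 2 * (p x / pinf - 1)) ∧
          Real.exp (-‖x‖ ^ 2 * (p x / pinf - 1)) ≤ Real.exp (Cγ / pinf)) ∧
        ((Real.exp (Cγ * (pm / (pm - 1)) / pinf))⁻¹ ≤
            Real.exp (-‖x‖ ^ 2 * ((p x / (p x - 1)) / (pinf / (pinf - 1)) - 1)) ∧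
          Real.exp (-‖x‖ ^ 2 * ((p x / (p x - 1)) / (pinf / (pinf - 1)) - 1)) ≤
            Real.exp (Cγ * (pm / (pm - 1)) / pinf))) :=
  PgammaInf_equivalence_general d hd p pm hpm hlo
end

section
/- Let d ≥ 1. There exists a countable family ℱ of closed Euclidean balls in ℝ^d, containing the ball B(0,1), and constants N ∈ ℕ, c ≥ 1 and C_n ≥ 1 depending only on d, such that: (i) the balls of ℱ cover ℝ^d; (ii) Σ_{B∈ℱ} χ_B(x) ≤ N for all x ∈ ℝ^d; (iii) every ball B ∈ ℱ other than B(0,1) has center c_B with |c_B| ≥ 1/2 and diameter 2/(2|c_B|) = 1/|c_B| (it is the double of a ball of diameter 1/(2|c_B|)); (iv) for every B ∈ ℱ and all x, y ∈ B, c^{-1} e^{−|y|²} ≤ e^{−|x|²} ≤ c e^{−|y|²}; (v) for every x ∈ B ∈ ℱ, the admissible ball B_h(x) = {y : |x−y| ≤ d·min(1, 1/|x|)} is contained in the dilated ball C_n·B (same center, radius multiplied by C_n); and (vi) the dilated family {C_n·B : B ∈ ℱ} also has bounded overlap and satisfies the Gaussian-density comparability of (iv). -/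
open MeasureTheory Metric Set ENNReal

/-!
Away from the unit ball, the shell `n ≤ ‖x‖ < n + 1` is covered by the balls of radius
`1/(2‖c‖)` centred at the points `c` of a lattice of mesh `1/(8dn)`. On such a ball, and on its
dilates by a fixed factor, `‖x‖² - ‖y‖²` stays bounded because the radius times `‖c‖` is `1/2`;
this is the Gaussian comparability. A point `x` of the ball has `‖x‖ ≳ ‖c‖`, so its admissible
ball has radius `≲ d/‖c‖` and fits into the dilate by `18d + 1`. Bounded overlap is a count: a
point meets only the shells with `|n - ‖x‖| ≤ m + 1` when dilating by `m`, and in each of them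
only the `(16dm + 1)^d` lattice points within distance `m/n`.
-/

namespace GaussianCovering

section CoveringBall

variable {E : Type*} [NormedAddCommGroup E]

theorem exp_neg_norm_sq_le_of_mem_closedBall {c x y : E} {ρ : ℝ}
    (hx : x ∈ closedBall c ρ) (hy : y ∈ closedBall c ρ) :
    Real.exp (-‖x‖ ^ 2) ≤ Real.exp (4 * ρ * (‖c‖ + ρ)) * Real.exp (-‖y‖ ^ 2) := by
  rw [mem_closedBall_iff_norm] at hx hy
  rw [← Real.exp_add, Real.exp_le_exp]
  have hρ : 0 ≤ ρ := (norm_nonneg _).trans hx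
  have hdiff : ‖y‖ - ‖x‖ ≤ 2 * ρ := by
    have := norm_sub_norm_le y x
    have := norm_sub_le_norm_sub_add_norm_sub y c x
    rw [norm_sub_rev c x] at this
    linarith
  have hsum : ‖y‖ + ‖x‖ ≤ 2 * (‖c‖ + ρ) := by
    have := norm_le_norm_add_norm_sub' y c
    have := norm_le_norm_add_norm_sub' x c
    linarith
  nlinarith [norm_nonneg x, norm_nonneg y,
    mul_le_mul_of_nonneg_left hsum (by positivity : 0 ≤ 2 * ρ)]

def IsCoveringBall (b : E × ℝ) : Prop :=
  b = (0, 1) ∨ 3 / 4 ≤ ‖b.1‖ ∧ b.2 = 1 / (2 * ‖b.1‖)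

namespace IsCoveringBall

variable {b : E × ℝ}

theorem radius_pos (hb : IsCoveringBall b) : 0 < b.2 := by
  rcases hb with rfl | ⟨hc, hr⟩
  · exact one_pos
  · rw [hr]; positivity

theorem radius_le_one (hb : IsCoveringBall b) : b.2 ≤ 1 := by
  rcases hb with rfl | ⟨hc, hr⟩
  · exact le_rfl
  · rw [hr, div_le_one (by positivity)]; linarith

theorem radius_mul_norm_le (hb : IsCoveringBall b) : b.2 * ‖b.1‖ ≤ 1 / 2 := by
  rcases hb with rfl | ⟨hc, hr⟩
  · norm_num
  · rw [hr, div_mul_eq_mul_div, one_mul, div_le_iff₀ (by positivity)]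
    linarith

theorem exp_neg_norm_sq_comparable (hb : IsCoveringBall b) {t : ℝ} (ht : 0 ≤ t)
    {x y : E} (hx : x ∈ closedBall b.1 (t * b.2)) (hy : y ∈ closedBall b.1 (t * b.2)) :
    (Real.exp (2 * t + 4 * t ^ 2))⁻¹ * Real.exp (-‖y‖ ^ 2) ≤ Real.exp (-‖x‖ ^ 2) ∧
      Real.exp (-‖x‖ ^ 2) ≤ Real.exp (2 * t + 4 * t ^ 2) * Real.exp (-‖y‖ ^ 2) := by
  have hexp : Real.exp (4 * (t * b.2) * (‖b.1‖ + t * b.2)) ≤ Real.exp (2 * t + 4 * t ^ 2) := by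
    have h1 := hb.radius_mul_norm_le
    have h2 := hb.radius_le_one
    have h3 := hb.radius_pos
    gcongr
    nlinarith [mul_le_mul_of_nonneg_left h1 ht, mul_le_mul h2 h2 h3.le zero_le_one,
      sq_nonneg t]
  refine ⟨?_, (exp_neg_norm_sq_le_of_mem_closedBall hx hy).trans (by gcongr)⟩
  rw [inv_mul_le_iff₀ (Real.exp_pos _)]
  exact (exp_neg_norm_sq_le_of_mem_closedBall hy hx).trans (by gcongr)

theorem subset_closedBall_of_mem (hb : IsCoveringBall b) {a : ℝ} (ha : 0 ≤ a) {x : E}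
    (hx : x ∈ closedBall b.1 b.2) :
    {y | ‖x - y‖ ≤ a * min 1 (1 / ‖x‖)} ⊆ closedBall b.1 ((18 * a + 1) * b.2) := by
  intro y (hy : ‖x - y‖ ≤ _)
  rw [mem_closedBall_iff_norm] at hx ⊢
  have htri : ‖y - b.1‖ ≤ ‖x - y‖ + ‖x - b.1‖ := by
    simpa [norm_sub_rev y x] using norm_sub_le_norm_sub_add_norm_sub y x b.1
  rcases hb with rfl | ⟨hc, hr⟩
  · have : a * min 1 (1 / ‖x‖) ≤ a := mul_le_of_le_one_right ha (min_le_left _ _)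
    dsimp only at hx ⊢
    linarith
  · set r := b.2
    have hrc : 2 * r * ‖b.1‖ = 1 := by rw [hr]; field_simp
    -- the ball sits at distance ≍ ‖b.1‖ from the origin since its radius is ≤ (8/9)‖b.1‖
    have hxc : ‖b.1‖ / 9 ≤ ‖x‖ := by
      have := norm_sub_norm_le b.1 x
      rw [norm_sub_rev] at this
      nlinarith
    have hxy : ‖x - y‖ ≤ 18 * a * r := by
      calc ‖x - y‖ ≤ a * (1 / ‖x‖) := hy.trans (by gcongr; exact min_le_right _ _)
        _ ≤ a * (18 * r) := by
          gcongr
          rw [div_le_iff₀ (by linarith)]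
          nlinarith
        _ = 18 * a * r := by ring
    linarith

end IsCoveringBall

end CoveringBall

section Lattice

variable {d : ℕ}

def lattice (d : ℕ) (δ : ℝ) : Set (EuclideanSpace ℝ (Fin d)) :=
  range fun z : Fin d → ℤ => WithLp.toLp 2 fun i => δ * z i

theorem countable_lattice (d : ℕ) (δ : ℝ) : (lattice d δ).Countable :=
  countable_range _

theorem norm_le_mul_of_forall_abs_le {v : EuclideanSpace ℝ (Fin d)} {a : ℝ} (ha : 0 ≤ a)
    (h : ∀ i, |v i| ≤ a) : ‖v‖ ≤ d * a := by
  have hsq : ‖v‖ ^ 2 ≤ (d * a) ^ 2 := by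
    rw [EuclideanSpace.norm_sq_eq]
    calc ∑ i, ‖v i‖ ^ 2 ≤ ∑ _i : Fin d, a ^ 2 := by
          gcongr with i
          exact (Real.norm_eq_abs _).trans_le (h i)
      _ = d * a ^ 2 := by simp
      _ ≤ (d * a) ^ 2 := by
          rw [mul_pow]
          gcongr
          exact_mod_cast Nat.le_self_pow two_ne_zero d
  exact (pow_le_pow_iff_left₀ (norm_nonneg _) (by positivity) two_ne_zero).1 hsq

theorem exists_mem_lattice_norm_sub_le {δ : ℝ} (hδ : 0 < δ) (x : EuclideanSpace ℝ (Fin d)) :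
    ∃ c ∈ lattice d δ, ‖x - c‖ ≤ d * δ / 2 := by
  refine ⟨_, ⟨fun i => round (x i / δ), rfl⟩, ?_⟩
  rw [mul_div_assoc]
  refine norm_le_mul_of_forall_abs_le (by positivity) fun i => ?_
  have h := abs_sub_round (x i / δ)
  have hi : (x - WithLp.toLp 2 fun i => δ * round (x i / δ)) i =
      δ * (x i / δ - round (x i / δ)) := by
    simp only [PiLp.sub_apply]; field_simp
  rw [hi, abs_mul, abs_of_pos hδ]
  linarith [mul_le_mul_of_nonneg_left h hδ.le]

theorem encard_lattice_inter_closedBall_le {δ : ℝ} (hδ : 0 < δ) (x : EuclideanSpace ℝ (Fin d))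
    (B : ℕ) : (lattice d δ ∩ closedBall x (B * δ)).encard ≤ ((2 * B + 1) ^ d : ℕ) := by
  classical
  set box : Finset (Fin d → ℤ) :=
    Fintype.piFinset fun i => Finset.Icc (⌈x i / δ⌉ - B) (⌊x i / δ⌋ + B)
  have hsub : lattice d δ ∩ closedBall x (B * δ) ⊆
      (fun z : Fin d → ℤ => WithLp.toLp 2 fun i => δ * z i : _ → EuclideanSpace ℝ (Fin d)) ''
        box := by
    rintro _ ⟨⟨z, rfl⟩, hz⟩
    refine ⟨z, Fintype.mem_piFinset.2 fun i => ?_, rfl⟩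
    have hi : |δ * z i - x i| ≤ B * δ :=
      (PiLp.norm_apply_le (p := 2) _ i).trans (mem_closedBall_iff_norm.1 hz)
    rw [abs_le] at hi
    rw [Finset.mem_Icc, sub_le_iff_le_add, Int.ceil_le, ← sub_le_iff_le_add, Int.le_floor]
    constructor
    · push_cast
      rw [div_le_iff₀ hδ]; nlinarith
    · push_cast
      rw [le_div_iff₀ hδ]; nlinarith
  have hcard : box.card ≤ (2 * B + 1) ^ d := by
    rw [Fintype.card_piFinset]
    refine (Finset.prod_le_pow_card _ _ (2 * B + 1) fun i _ => ?_).trans_eq (by simp)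
    rw [Int.card_Icc]
    have := Int.floor_le_ceil (x i / δ)
    omega
  calc (lattice d δ ∩ closedBall x (B * δ)).encard ≤ (box : Set (Fin d → ℤ)).encard :=
        (encard_mono hsub).trans (encard_image_le _ _)
    _ ≤ ((2 * B + 1) ^ d : ℕ) := by
        rw [encard_coe_eq_coe_finsetCard]; exact_mod_cast hcard

end Lattice

theorem tsum_indicator_one_eq_encard {ι α : Type*} (F : Set ι) (s : ι → Set α) (x : α) :
    ∑' b : F, (s b).indicator (fun _ => (1 : ℝ≥0∞)) x = {b | b ∈ F ∧ x ∈ s b}.encard := by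
  rw [← tsum_set_one, tsum_subtype F fun b => (s b).indicator _ x,
    tsum_subtype {b | b ∈ F ∧ x ∈ s b} fun _ => (1 : ℝ≥0∞)]
  congr 1; ext b
  by_cases hb : b ∈ F <;> by_cases hx : x ∈ s b <;> simp [hb, hx]

section Family

variable {d : ℕ}

noncomputable def shellSpacing (d n : ℕ) : ℝ := 1 / (8 * d * n)

def shellCenters (d : ℕ) : Set (EuclideanSpace ℝ (Fin d)) :=
  {c | ∃ n : ℕ, 1 ≤ n ∧ c ∈ lattice d (shellSpacing d n) ∧ n - 1 / 4 ≤ ‖c‖ ∧ ‖c‖ ≤ n + 5 / 4}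

noncomputable def coveringFamily (d : ℕ) : Set (EuclideanSpace ℝ (Fin d) × ℝ) :=
  insert (0, 1) ((fun c => (c, 1 / (2 * ‖c‖))) '' shellCenters d)

theorem shellSpacing_pos (hd : 1 ≤ d) {n : ℕ} (hn : 1 ≤ n) : 0 < shellSpacing d n := by
  unfold shellSpacing
  have : (1 : ℝ) ≤ d := by exact_mod_cast hd
  have : (1 : ℝ) ≤ n := by exact_mod_cast hn
  positivity

theorem isCoveringBall_of_mem_coveringFamily {b : EuclideanSpace ℝ (Fin d) × ℝ}
    (hb : b ∈ coveringFamily d) : IsCoveringBall b := by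
  rcases hb with rfl | ⟨c, ⟨n, hn, -, hc, -⟩, rfl⟩
  · exact Or.inl rfl
  · have : (1 : ℝ) ≤ n := by exact_mod_cast hn
    exact Or.inr ⟨by linarith, rfl⟩

theorem countable_coveringFamily (d : ℕ) : (coveringFamily d).Countable := by
  refine (Countable.image ?_ _).insert _
  refine (countable_iUnion fun n => countable_lattice d (shellSpacing d n)).mono ?_
  rintro c ⟨n, -, hc, -⟩
  exact mem_iUnion.2 ⟨n, hc⟩

theorem exists_mem_coveringFamily (hd : 1 ≤ d) (x : EuclideanSpace ℝ (Fin d)) :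
    ∃ b ∈ coveringFamily d, x ∈ closedBall b.1 b.2 := by
  by_cases hx : ‖x‖ ≤ 1
  · exact ⟨(0, 1), mem_insert _ _, mem_closedBall_zero_iff.2 hx⟩
  set n := ⌊‖x‖⌋₊
  have hn : 1 ≤ n := Nat.le_floor (by push_cast; linarith)
  have hn' : (1 : ℝ) ≤ n := by exact_mod_cast hn
  have hnx : (n : ℝ) ≤ ‖x‖ := Nat.floor_le (norm_nonneg x)
  have hxn : ‖x‖ < n + 1 := Nat.lt_floor_add_one _
  obtain ⟨c, hc, hxc⟩ := exists_mem_lattice_norm_sub_le (shellSpacing_pos hd hn) x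
  have hxc' : ‖x - c‖ ≤ 1 / (16 * n) := by
    have : (d : ℝ) ≠ 0 := by positivity
    convert hxc using 1
    unfold shellSpacing; field_simp; ring
  have h16 : 1 / (16 * n) ≤ (1 / 16 : ℝ) := by
    rw [div_le_div_iff₀ (by positivity) (by norm_num)]; linarith
  have hcx := abs_norm_sub_norm_le x c
  rw [abs_le] at hcx
  refine ⟨_, mem_insert_of_mem _ ⟨c, ⟨n, hn, hc, by linarith, by linarith⟩, rfl⟩,
    mem_closedBall_iff_norm.2 (hxc'.trans ?_)⟩
  rw [one_div_le_one_div (by positivity) (by linarith)]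
  linarith

theorem mem_Icc_floor_norm_of_norm_sub_le {n m : ℕ} {c x : EuclideanSpace ℝ (Fin d)}
    (hc₁ : n - 1 / 4 ≤ ‖c‖) (hc₂ : ‖c‖ ≤ n + 5 / 4) (hxc : ‖x - c‖ ≤ m) :
    n ∈ Finset.Icc (⌊‖x‖⌋₊ - (m + 1)) (⌊‖x‖⌋₊ + (m + 1)) := by
  have h₁ := Nat.floor_le (norm_nonneg x)
  have h₂ := Nat.lt_floor_add_one ‖x‖
  have hcx := abs_norm_sub_norm_le x c
  rw [abs_le] at hcx
  have hup : n < ⌊‖x‖⌋₊ + (m + 1) + 1 := by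
    exact_mod_cast (show (n : ℝ) < ⌊‖x‖⌋₊ + (m + 1) + 1 by linarith)
  have hlo : ⌊‖x‖⌋₊ < n + (m + 1) + 1 := by
    exact_mod_cast (show (⌊‖x‖⌋₊ : ℝ) < n + (m + 1) + 1 by linarith)
  rw [Finset.mem_Icc]
  omega

theorem encard_setOf_mem_dilate_le (hd : 1 ≤ d) (m : ℕ) (x : EuclideanSpace ℝ (Fin d)) :
    {b | b ∈ coveringFamily d ∧ x ∈ closedBall b.1 (m * b.2)}.encard ≤
      (1 + (2 * m + 3) * (16 * d * m + 1) ^ d : ℕ) := by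
  set window := (Finset.Icc (⌊‖x‖⌋₊ - (m + 1)) (⌊‖x‖⌋₊ + (m + 1))).filter (1 ≤ ·)
  set near := fun n : ℕ =>
    lattice d (shellSpacing d n) ∩ closedBall x ((8 * d * m : ℕ) * shellSpacing d n)
  have hsub : {b | b ∈ coveringFamily d ∧ x ∈ closedBall b.1 (m * b.2)} ⊆
      insert (0, 1) ((fun c => (c, 1 / (2 * ‖c‖))) '' ⋃ n ∈ window, near n) := by
    rintro b ⟨rfl | ⟨c, ⟨n, hn, hlat, hc₁, hc₂⟩, rfl⟩, hx⟩
    · exact mem_insert _ _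
    have hn' : (1 : ℝ) ≤ n := by exact_mod_cast hn
    have hxc : ‖x - c‖ ≤ m / n := by
      refine (mem_closedBall_iff_norm.1 hx).trans ?_
      rw [mul_one_div]
      exact div_le_div_of_nonneg_left (Nat.cast_nonneg m) (by positivity) (by linarith)
    refine mem_insert_of_mem _ ⟨c, mem_biUnion (Finset.mem_filter.2 ⟨?_, hn⟩) ⟨hlat, ?_⟩, rfl⟩
    · exact mem_Icc_floor_norm_of_norm_sub_le hc₁ hc₂ (hxc.trans (div_le_self (Nat.cast_nonneg m) hn'))
    · rw [mem_closedBall', dist_eq_norm]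
      refine hxc.trans_eq ?_
      have : (d : ℝ) ≠ 0 := by positivity
      unfold shellSpacing; push_cast; field_simp
  have hwindow : window.card ≤ 2 * m + 3 :=
    (Finset.card_filter_le _ _).trans (by rw [Nat.card_Icc]; omega)
  calc {b | b ∈ coveringFamily d ∧ x ∈ closedBall b.1 (m * b.2)}.encard
      ≤ (⋃ n ∈ window, near n).encard + 1 :=
        (encard_mono hsub).trans
          ((encard_insert_le _ _).trans (by gcongr; exact encard_image_le _ _))
    _ ≤ ∑ n ∈ window, (((16 * d * m + 1) ^ d : ℕ) : ℕ∞) + 1 := by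
        gcongr
        refine (Finset.set_encard_biUnion_le _ _).trans (Finset.sum_le_sum fun n hn => ?_)
        refine (encard_lattice_inter_closedBall_le
          (shellSpacing_pos hd (Finset.mem_filter.1 hn).2) x _).trans_eq ?_
        congr 3; ring
    _ ≤ _ := by
        rw [Finset.sum_const, nsmul_eq_mul, add_comm]
        norm_cast
        gcongr

theorem exists_tsum_indicator_dilate_le (hd : 1 ≤ d) (m : ℕ) :
    ∃ N : ℕ, ∀ x : EuclideanSpace ℝ (Fin d), ∑' b : coveringFamily d,
      (closedBall b.1.1 (m * b.1.2)).indicator (fun _ => (1 : ℝ≥0∞)) x ≤ N := by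
  refine ⟨1 + (2 * m + 3) * (16 * d * m + 1) ^ d, fun x => ?_⟩
  rw [tsum_indicator_one_eq_encard _
    fun b : EuclideanSpace ℝ (Fin d) × ℝ => closedBall b.1 (m * b.2)]
  exact_mod_cast encard_setOf_mem_dilate_le hd m x

end Family

end GaussianCovering

open GaussianCovering in
/-- The covering lemma for Gaussian harmonic analysis: there is a countable family of
closed balls (recorded as center–radius pairs), containing `B(0,1)`, which covers `ℝ^d`,
has bounded overlap, whose balls other than `B(0,1)` have centers `c_B` with
`|c_B| ≥ 1/2` and diameter `1/|c_B|`, on each of which the Gaussian density `e^{-|·|²}`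
is comparable to a constant, such that for `x ∈ B` the admissible ball `B_h(x)` is
contained in the dilate `C_n·B`, and the dilated family again has bounded overlap and
Gaussian-density comparability. -/
theorem gaussian_covering_lemma (d : ℕ) (hd : 1 ≤ d) :
    ∃ (F : Set (EuclideanSpace ℝ (Fin d) × ℝ)) (N : ℕ) (c Cn : ℝ),
      F.Countable ∧
      ((0 : EuclideanSpace ℝ (Fin d)), (1 : ℝ)) ∈ F ∧
      (∀ b ∈ F, 0 < b.2) ∧ 1 ≤ c ∧ 1 ≤ Cn ∧
      -- (i) the balls of F cover ℝ^d
      (∀ x : EuclideanSpace ℝ (Fin d), ∃ b ∈ F, x ∈ Metric.closedBall b.1 b.2) ∧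
      -- (ii) bounded overlap
      (∀ x : EuclideanSpace ℝ (Fin d),
        ∑' b : F, (Metric.closedBall b.1.1 b.1.2).indicator
          (fun _ => (1 : ℝ≥0∞)) x ≤ (N : ℝ≥0∞)) ∧
      -- (iii) centers and diameters of the balls other than B(0,1)
      (∀ b ∈ F, b ≠ ((0 : EuclideanSpace ℝ (Fin d)), (1 : ℝ)) →
        (1 / 2 : ℝ) ≤ ‖b.1‖ ∧ 2 * b.2 = 1 / ‖b.1‖) ∧
      -- (iv) the Gaussian density is essentially constant on each ball
      (∀ b ∈ F, ∀ x ∈ Metric.closedBall b.1 b.2, ∀ y ∈ Metric.closedBall b.1 b.2,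
        c⁻¹ * Real.exp (-‖y‖ ^ 2) ≤ Real.exp (-‖x‖ ^ 2) ∧
          Real.exp (-‖x‖ ^ 2) ≤ c * Real.exp (-‖y‖ ^ 2)) ∧
      -- (v) admissible balls of points of B are contained in the dilate Cn·B
      (∀ b ∈ F, ∀ x ∈ Metric.closedBall b.1 b.2,
        {y : EuclideanSpace ℝ (Fin d) | ‖x - y‖ ≤ (d : ℝ) * min 1 (1 / ‖x‖)} ⊆
          Metric.closedBall b.1 (Cn * b.2)) ∧
      -- (vi) the dilated family has bounded overlap ...
      (∃ N' : ℕ, ∀ x : EuclideanSpace ℝ (Fin d),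
        ∑' b : F, (Metric.closedBall b.1.1 (Cn * b.1.2)).indicator
          (fun _ => (1 : ℝ≥0∞)) x ≤ (N' : ℝ≥0∞)) ∧
      -- ... and satisfies the Gaussian-density comparability of (iv)
      (∃ c' : ℝ, 1 ≤ c' ∧ ∀ b ∈ F, ∀ x ∈ Metric.closedBall b.1 (Cn * b.2),
        ∀ y ∈ Metric.closedBall b.1 (Cn * b.2),
          c'⁻¹ * Real.exp (-‖y‖ ^ 2) ≤ Real.exp (-‖x‖ ^ 2) ∧
            Real.exp (-‖x‖ ^ 2) ≤ c' * Real.exp (-‖y‖ ^ 2)) := by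
  have hF : ∀ b ∈ coveringFamily d, IsCoveringBall b := fun b hb =>
    isCoveringBall_of_mem_coveringFamily hb
  obtain ⟨N, hN⟩ := exists_tsum_indicator_dilate_le hd 1
  obtain ⟨N', hN'⟩ := exists_tsum_indicator_dilate_le hd (18 * d + 1)
  refine ⟨coveringFamily d, N, Real.exp (2 * 1 + 4 * 1 ^ 2), (18 * d + 1 : ℕ),
    countable_coveringFamily d, mem_insert _ _, fun b hb => (hF b hb).radius_pos,
    Real.one_le_exp (by norm_num), by norm_cast; omega, exists_mem_coveringFamily hd,
    by simpa using hN, fun b hb hne => ?_, fun b hb x hx y hy => ?_,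
    fun b hb x hx => ?_, ⟨N', hN'⟩, ⟨_, Real.one_le_exp (by positivity),
      fun b hb x hx y hy => (hF b hb).exp_neg_norm_sq_comparable (Nat.cast_nonneg _) hx hy⟩⟩
  · obtain ⟨hc, hr⟩ := (hF b hb).resolve_left hne
    exact ⟨by linarith, by rw [hr]; field_simp⟩
  · exact (hF b hb).exp_neg_norm_sq_comparable zero_le_one (by rwa [one_mul]) (by rwa [one_mul])
  · push_cast
    exact (hF b hb).subset_closedBall_of_mem (Nat.cast_nonneg d) hx
end

section
/- Let d ≥ 1. There exists a constant C_d > 0 such that for every s ∈ (0,1] and all x, y ∈ ℝ^d with |x − y| ≤ d·min(1, 1/|x|), one has exp(−|√(1−s)·x − y|²/s) ≤ C_d exp(−|x − y|²/s). -/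
/-!
Write `t = 1 - √(1 - s)`, so that `0 ≤ t ≤ s` and `√(1 - s) x - y = (x - y) - t x`. Expanding the
square loses at most `2 t ‖x - y‖ ‖x‖ ≤ 2 s d` on the admissible ball, since there
`‖x - y‖ ‖x‖ ≤ d`; after division by `s` this costs the factor `C_d = exp (2 d)`.
-/

open Real

lemma one_sub_sqrt_one_sub_nonneg {s : ℝ} (hs : 0 ≤ s) : 0 ≤ 1 - √(1 - s) := by
  linarith [sqrt_le_one.mpr (by linarith : 1 - s ≤ 1)]

lemma one_sub_sqrt_one_sub_le {s : ℝ} (hs : 0 ≤ s) : 1 - √(1 - s) ≤ s := by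
  rcases le_total s 1 with hs1 | hs1
  · have : 1 - s ≤ √(1 - s) := by
      nlinarith [sq_sqrt (by linarith : 0 ≤ 1 - s), sqrt_nonneg (1 - s),
        sqrt_le_one.mpr (by linarith : 1 - s ≤ 1)]
    linarith
  · linarith [sqrt_nonneg (1 - s)]

lemma sq_norm_sub_two_mul_le_sq_norm_sub {E : Type*} [SeminormedAddCommGroup E] (v w : E) :
    ‖v‖ ^ 2 - 2 * ‖v‖ * ‖w‖ ≤ ‖v - w‖ ^ 2 :=
  calc ‖v‖ ^ 2 - 2 * ‖v‖ * ‖w‖ ≤ (‖v‖ - ‖w‖) ^ 2 := by nlinarith [sq_nonneg ‖w‖]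
    _ ≤ ‖v - w‖ ^ 2 := sq_le_sq' (abs_le.mp (abs_norm_sub_norm_le v w)).1
        (abs_le.mp (abs_norm_sub_norm_le v w)).2

lemma sq_norm_sub_le_sq_norm_sqrt_one_sub_smul_sub {E : Type*} [SeminormedAddCommGroup E]
    [NormedSpace ℝ E] {s : ℝ} (hs : 0 ≤ s) (x y : E) :
    ‖x - y‖ ^ 2 - 2 * s * (‖x - y‖ * ‖x‖) ≤ ‖√(1 - s) • x - y‖ ^ 2 := by
  set t := 1 - √(1 - s)
  have ht : 0 ≤ t := one_sub_sqrt_one_sub_nonneg hs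
  have hdecomp : √(1 - s) • x - y = (x - y) - t • x := by
    simp only [t, sub_smul, one_smul]; abel
  have hnorm : ‖t • x‖ = t * ‖x‖ := by rw [norm_smul, norm_of_nonneg ht]
  have hloss : t * (‖x - y‖ * ‖x‖) ≤ s * (‖x - y‖ * ‖x‖) :=
    mul_le_mul_of_nonneg_right (one_sub_sqrt_one_sub_le hs) (by positivity)
  have hexpand := sq_norm_sub_two_mul_le_sq_norm_sub (x - y) (t • x)
  rw [hnorm] at hexpand
  rw [hdecomp]
  nlinarith

lemma mul_le_of_le_mul_min_one_one_div {r a c : ℝ} (ha : 0 ≤ a) (hc : 0 ≤ c)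
    (h : r ≤ c * min 1 (1 / a)) : r * a ≤ c := by
  rcases ha.eq_or_lt with rfl | ha
  · simpa using hc
  · calc r * a ≤ c * (1 / a) * a := by gcongr; exact h.trans (by gcongr; exact min_le_right _ _)
      _ = c := by field_simp

theorem ou_kernel_local_bound_general (d : ℕ) :
    ∃ C : ℝ, 0 < C ∧ ∀ s : ℝ, 0 < s → s ≤ 1 →
      ∀ x y : EuclideanSpace ℝ (Fin d),
        ‖x - y‖ ≤ (d : ℝ) * min 1 (1 / ‖x‖) →
        Real.exp (-‖Real.sqrt (1 - s) • x - y‖ ^ 2 / s) ≤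
          C * Real.exp (-‖x - y‖ ^ 2 / s) := by
  refine ⟨exp (2 * d), exp_pos _, fun s hs _ x y hxy => ?_⟩
  have hball : ‖x - y‖ * ‖x‖ ≤ d :=
    mul_le_of_le_mul_min_one_one_div (norm_nonneg x) d.cast_nonneg hxy
  have hsq := sq_norm_sub_le_sq_norm_sqrt_one_sub_smul_sub hs.le x y
  rw [← exp_add, exp_le_exp, add_div' _ _ _ hs.ne', div_le_div_iff_of_pos_right hs]
  nlinarith

/-- Estimate for the Ornstein–Uhlenbeck kernel on the local region: if `y` lies in the
admissible ball `B_h(x)`, then `exp(-|√(1-s)x - y|²/s) ≤ C_d exp(-|x-y|²/s)`. -/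
theorem ou_kernel_local_bound (d : ℕ) (hd : 1 ≤ d) :
    ∃ C : ℝ, 0 < C ∧ ∀ s : ℝ, 0 < s → s ≤ 1 →
      ∀ x y : EuclideanSpace ℝ (Fin d),
        ‖x - y‖ ≤ (d : ℝ) * min 1 (1 / ‖x‖) →
        Real.exp (-‖Real.sqrt (1 - s) • x - y‖ ^ 2 / s) ≤
          C * Real.exp (-‖x - y‖ ^ 2 / s) :=
  ou_kernel_local_bound_general d
end

section
/- Let d ≥ 1 and α > 0, and set P(x,y) = |x + y|^d e^{−α |x+y| |x−y|} for x, y ∈ ℝ^d. Then there exists a constant C > 0, depending only on d and α, such that for every x ∈ ℝ^d, ∫_{{y : |y − x| > 1/2}} P(x,y) dy ≤ C; by symmetry of P in x and y, the same bound holds for the integral in x over {x : |y − x| > 1/2} for every fixed y. -/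
open MeasureTheory ENNReal

/-!
On `{|y - x| > 1/2}` the factor `e^{-α|x+y||x-y|}` is at most `e^{-(α/2)|x+y|}`, so after the
translation `z = x + y` the integral is dominated by `∫ |z|^d e^{-(α/2)|z|} dz`, which is finite
and independent of `x`: `|z|^d e^{-(α/2)|z|} ≲ (1 + |z|)^{-(d+1)}`, which is integrable on
`ℝ^d`. The second bound is the first one with `x` and `y` exchanged.
-/

open Real in
lemma pow_mul_exp_neg_le (n m : ℕ) {c t : ℝ} (hc : 0 < c) (ht : 0 ≤ t) :
    t ^ n * exp (-(c * t)) ≤ (n + m).factorial * exp c / c ^ (n + m) * ((1 + t) ^ m)⁻¹ := by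
  rw [← div_eq_mul_inv, le_div_iff₀ (by positivity)]
  have hexp : (c * (1 + t)) ^ (n + m) ≤ (n + m).factorial * exp (c * (1 + t)) := by
    have := pow_div_factorial_le_exp (x := c * (1 + t)) (by positivity) (n + m)
    rwa [div_le_iff₀' (by positivity)] at this
  calc t ^ n * exp (-(c * t)) * (1 + t) ^ m
      ≤ (1 + t) ^ n * (1 + t) ^ m * exp (-(c * t)) := by
        rw [mul_right_comm]; gcongr; linarith
    _ = (c * (1 + t)) ^ (n + m) / c ^ (n + m) * exp (-(c * t)) := by
        rw [mul_pow, ← pow_add]; field_simp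
    _ ≤ (n + m).factorial * exp (c * (1 + t)) / c ^ (n + m) * exp (-(c * t)) := by gcongr
    _ = (n + m).factorial * exp c / c ^ (n + m) := by
        rw [div_mul_eq_mul_div, mul_assoc, ← exp_add]; ring_nf

section Kernel

variable {E : Type*} [NormedAddCommGroup E] [MeasurableSpace E]

open Module in
theorem lintegral_norm_pow_mul_exp_neg_lt_top [NormedSpace ℝ E] [FiniteDimensional ℝ E]
    [BorelSpace E] (μ : Measure E) [μ.IsAddHaarMeasure] (n : ℕ) {c : ℝ} (hc : 0 < c) :
    ∫⁻ z, ENNReal.ofReal (‖z‖ ^ n * Real.exp (-(c * ‖z‖))) ∂μ < ∞ := by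
  set m := finrank ℝ E + 1
  set K := ((n + m).factorial * Real.exp c / c ^ (n + m) : ℝ)
  calc ∫⁻ z, ENNReal.ofReal (‖z‖ ^ n * Real.exp (-(c * ‖z‖))) ∂μ
      ≤ ∫⁻ z, ENNReal.ofReal K * ENNReal.ofReal ((1 + ‖z‖) ^ (-(m : ℝ))) ∂μ := by
        refine lintegral_mono fun z => ?_
        rw [← ENNReal.ofReal_mul (by positivity), Real.rpow_neg (by positivity),
          Real.rpow_natCast]
        exact ENNReal.ofReal_le_ofReal (pow_mul_exp_neg_le n m hc (norm_nonneg z))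
    _ = ENNReal.ofReal K * ∫⁻ z, ENNReal.ofReal ((1 + ‖z‖) ^ (-(m : ℝ))) ∂μ :=
        lintegral_const_mul' _ _ ofReal_ne_top
    _ < ∞ := mul_lt_top ofReal_lt_top (finite_integral_one_add_norm (by simp [m]))

omit [MeasurableSpace E] in
lemma exp_neg_mul_norm_add_mul_norm_sub_le {α : ℝ} (hα : 0 ≤ α) {x y : E}
    (hxy : 1 / 2 < ‖x - y‖) :
    Real.exp (-α * (‖x + y‖ * ‖x - y‖)) ≤ Real.exp (-(α / 2 * ‖x + y‖)) := by
  rw [Real.exp_le_exp, neg_mul, neg_le_neg_iff]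
  have := mul_le_mul_of_nonneg_left hxy.le (mul_nonneg hα (norm_nonneg (x + y)))
  linarith

theorem setLIntegral_kernel_le_lintegral [MeasurableAdd E] [OpensMeasurableSpace E]
    (μ : Measure E) [μ.IsAddLeftInvariant] (n : ℕ) {α : ℝ} (hα : 0 ≤ α) (x : E) :
    ∫⁻ y in {y | 1 / 2 < ‖y - x‖},
        ENNReal.ofReal (‖x + y‖ ^ n * Real.exp (-α * (‖x + y‖ * ‖x - y‖))) ∂μ ≤
      ∫⁻ z, ENNReal.ofReal (‖z‖ ^ n * Real.exp (-(α / 2 * ‖z‖))) ∂μ := by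
  have hS : MeasurableSet {y : E | 1 / 2 < ‖y - x‖} :=
    (isOpen_lt continuous_const (by fun_prop)).measurableSet
  calc ∫⁻ y in {y | 1 / 2 < ‖y - x‖},
        ENNReal.ofReal (‖x + y‖ ^ n * Real.exp (-α * (‖x + y‖ * ‖x - y‖))) ∂μ
      ≤ ∫⁻ y in {y | 1 / 2 < ‖y - x‖},
          ENNReal.ofReal (‖x + y‖ ^ n * Real.exp (-(α / 2 * ‖x + y‖))) ∂μ := by
        refine setLIntegral_mono' hS fun y hy => ENNReal.ofReal_le_ofReal ?_
        have hy : 1 / 2 < ‖x - y‖ := by rwa [norm_sub_rev]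
        exact mul_le_mul_of_nonneg_left (exp_neg_mul_norm_add_mul_norm_sub_le hα hy)
          (by positivity)
    _ ≤ ∫⁻ y, ENNReal.ofReal (‖x + y‖ ^ n * Real.exp (-(α / 2 * ‖x + y‖))) ∂μ :=
        setLIntegral_le_lintegral _ _
    _ = ∫⁻ z, ENNReal.ofReal (‖z‖ ^ n * Real.exp (-(α / 2 * ‖z‖))) ∂μ :=
        lintegral_add_left_eq_self
          (fun z => ENNReal.ofReal (‖z‖ ^ n * Real.exp (-(α / 2 * ‖z‖)))) x

end Kernel

theorem P_kernel_integrable_general (d : ℕ) (α : ℝ) (hα : 0 < α) :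
    ∃ C : ℝ, 0 < C ∧
      (∀ x : EuclideanSpace ℝ (Fin d),
        ∫⁻ y in {y : EuclideanSpace ℝ (Fin d) | 1 / 2 < ‖y - x‖},
            ENNReal.ofReal (‖x + y‖ ^ d * Real.exp (-α * (‖x + y‖ * ‖x - y‖))) ≤
          ENNReal.ofReal C) ∧
      (∀ y : EuclideanSpace ℝ (Fin d),
        ∫⁻ x in {x : EuclideanSpace ℝ (Fin d) | 1 / 2 < ‖y - x‖},
            ENNReal.ofReal (‖x + y‖ ^ d * Real.exp (-α * (‖x + y‖ * ‖x - y‖))) ≤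
          ENNReal.ofReal C) := by
  set I := ∫⁻ z : EuclideanSpace ℝ (Fin d),
    ENNReal.ofReal (‖z‖ ^ d * Real.exp (-(α / 2 * ‖z‖)))
  have hI : I ≤ ENNReal.ofReal (I.toReal + 1) :=
    (le_ofReal_iff_toReal_le (lintegral_norm_pow_mul_exp_neg_lt_top volume d (by positivity)).ne
      (by positivity)).2 (by linarith)
  have bound x := (setLIntegral_kernel_le_lintegral volume d hα.le x).trans hI
  refine ⟨I.toReal + 1, by positivity, bound, fun y => ?_⟩
  have hS : {x : EuclideanSpace ℝ (Fin d) | 1 / 2 < ‖y - x‖} = {x | 1 / 2 < ‖x - y‖} := by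
    simp only [norm_sub_rev y]
  refine le_of_eq_of_le ?_ (bound y)
  rw [hS]
  refine lintegral_congr fun x => ?_
  rw [add_comm, norm_sub_rev]

/-- For `P(x,y) = |x+y|^d e^{-α|x+y||x-y|}` with `α > 0`, the integral of `P(x,·)` over
`{y : |y-x| > 1/2}` is bounded by a constant depending only on `d` and `α`, uniformly in
`x`; by symmetry the same holds for the integral in `x` for fixed `y`. -/
theorem P_kernel_integrable (d : ℕ) (hd : 1 ≤ d) (α : ℝ) (hα : 0 < α) :
    ∃ C : ℝ, 0 < C ∧
      (∀ x : EuclideanSpace ℝ (Fin d),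
        ∫⁻ y in {y : EuclideanSpace ℝ (Fin d) | 1 / 2 < ‖y - x‖},
            ENNReal.ofReal (‖x + y‖ ^ d * Real.exp (-α * (‖x + y‖ * ‖x - y‖))) ≤
          ENNReal.ofReal C) ∧
      (∀ y : EuclideanSpace ℝ (Fin d),
        ∫⁻ x in {x : EuclideanSpace ℝ (Fin d) | 1 / 2 < ‖y - x‖},
            ENNReal.ofReal (‖x + y‖ ^ d * Real.exp (-α * (‖x + y‖ * ‖x - y‖))) ≤
          ENNReal.ofReal C) :=
  P_kernel_integrable_general d α hα
end

section
/- Let d ≥ 1. There exists a constant C_d > 0 such that for every s ∈ (0,1) and all x, y ∈ ℝ^d with ⟨x, y⟩ > 0 and |x − y| > d·min(1, 1/|x|), one has (πs)^{−d/2} exp(−|√(1−s)·x − y|²/s) ≤ C_d · t₀^{−d/2} e^{−u₀}, where a = |x|² + |y|², b = 2⟨x,y⟩, t₀ = 2√(a² − b²)/(a + √(a² − b²)), and u₀ = (1/2)(|y|² − |x|² + |x + y| |x − y|). -/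
open scoped Nat RealInnerProductSpace

/-!
With `c = √(1 - s)`, `a = |x|² + |y|²`, `b = 2⟨x,y⟩` and `S = √(a² - b²) = |x + y| |x - y|`,
completing the square in `c` gives
`|c x - y|² / s = u₀ + (a + S) (c - c₀)² / (2 s)` with `c₀ = b / (a + S)` and `c₀² = 1 - t₀`.
For `s ≥ t₀ / 2` the prefactor `s^{-d/2}` is already at most `2^{d/2} t₀^{-d/2}`. For `s < t₀ / 2`
we have `c - c₀ ≥ t₀ / 4`, and since `S > 1` off the admissible ball the extra exponent is at least
`t₀ / (16 s)`, so the Gaussian factor `exp (-t₀ / (16 s)) ≤ d! (16 s / t₀)^d` absorbs `s^{-d/2}`.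
-/

lemma rpow_half_mul_exp_neg_le (d : ℕ) {r D : ℝ} (hr : 0 ≤ r) (hD : 0 ≤ D)
    (hrD : 2 < r → r / 16 ≤ D) : r ^ ((d : ℝ) / 2) * Real.exp (-D) ≤ d ! * 16 ^ d := by
  have hd : (d : ℝ) / 2 ≤ d := by linarith [d.cast_nonneg (α := ℝ)]
  rcases le_or_gt r 2 with hr2 | hr2
  · calc r ^ ((d : ℝ) / 2) * Real.exp (-D) ≤ 2 ^ ((d : ℝ) / 2) * 1 :=
          mul_le_mul (Real.rpow_le_rpow hr hr2 (by positivity))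
            (Real.exp_le_one_iff.mpr (by linarith)) (by positivity) (by positivity)
      _ ≤ 2 ^ (d : ℝ) := by rw [mul_one]; exact Real.rpow_le_rpow_of_exponent_le one_le_two hd
      _ = 2 ^ d := Real.rpow_natCast 2 d
      _ ≤ 16 ^ d := pow_le_pow_left₀ (by norm_num) (by norm_num) d
      _ ≤ d ! * 16 ^ d :=
          le_mul_of_one_le_left (by positivity) (by exact_mod_cast d.factorial_pos)
  · have hexp : Real.exp (-D) ≤ d ! / (r / 16) ^ d := by
      rw [Real.exp_neg, ← inv_div]
      exact inv_anti₀ (by positivity) ((Real.pow_div_factorial_le_exp _ (by positivity) d).trans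
        (Real.exp_le_exp.mpr (hrD hr2)))
    calc r ^ ((d : ℝ) / 2) * Real.exp (-D) ≤ r ^ d * (d ! / (r / 16) ^ d) := by
          refine mul_le_mul ?_ hexp (by positivity) (by positivity)
          rw [← Real.rpow_natCast]
          exact Real.rpow_le_rpow_of_exponent_le (by linarith) hd
      _ = d ! * 16 ^ d := by rw [div_pow]; field_simp

lemma rpow_neg_half_mul_exp_neg_le (d : ℕ) {s T D : ℝ} (hs : 0 < s) (hT : 0 < T) (hD : 0 ≤ D)
    (hsD : 2 * s < T → T / (16 * s) ≤ D) :
    s ^ (-(d : ℝ) / 2) * Real.exp (-D) ≤ d ! * 16 ^ d * T ^ (-(d : ℝ) / 2) := by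
  have hscale : s ^ (-(d : ℝ) / 2) = (T / s) ^ ((d : ℝ) / 2) * T ^ (-(d : ℝ) / 2) := by
    rw [Real.div_rpow hT.le hs.le, neg_div, Real.rpow_neg hs.le, Real.rpow_neg hT.le]
    field_simp
  rw [hscale, mul_right_comm]
  refine mul_le_mul_of_nonneg_right ?_ (by positivity)
  refine rpow_half_mul_exp_neg_le d (by positivity) hD fun h => ?_
  rw [div_div, mul_comm]
  exact hsD ((lt_div_iff₀ hs).mp h)

lemma sq_div_add_eq_one_sub_div {a b S : ℝ} (hS : S ^ 2 = a ^ 2 - b ^ 2) (haS : 0 < a + S) :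
    (b / (a + S)) ^ 2 = 1 - 2 * S / (a + S) := by
  field_simp
  linear_combination hS

lemma sq_mul_add_sub_mul_eq {p q b S c s : ℝ} (hS : S ^ 2 = (p + q) ^ 2 - b ^ 2)
    (haS : 0 < p + q + S) (hc : c ^ 2 = 1 - s) :
    c ^ 2 * p + q - b * c =
      s * (q - p + S) / 2 + (p + q + S) * (c - b / (p + q + S)) ^ 2 / 2 := by
  field_simp
  linear_combination -(p + q + S) * (q - p + S) * hc - hS

lemma div_four_le_sub_of_le_two_mul_sq_sub_sq {c c₀ T : ℝ} (hc0 : 0 ≤ c) (hc : c ≤ 1)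
    (hc₀ : c₀ ≤ 1) (hT : 0 ≤ T) (h : T ≤ 2 * (c ^ 2 - c₀ ^ 2)) :
    T / 4 ≤ c - c₀ := by
  have hle : c₀ ≤ c := by nlinarith
  nlinarith [mul_le_mul_of_nonneg_left (add_le_add hc hc₀) (sub_nonneg.mpr hle)]

lemma rpow_neg_half_mul_exp_neg_div_le (d : ℕ) {p q b S c s : ℝ} (hpq : 0 ≤ p + q) (hS1 : 1 < S)
    (hS : S ^ 2 = (p + q) ^ 2 - b ^ 2) (hs : 0 < s) (hc0 : 0 ≤ c)
    (hc : c ^ 2 = 1 - s) :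
    s ^ (-(d : ℝ) / 2) * Real.exp (-(c ^ 2 * p + q - b * c) / s) ≤
      d ! * 16 ^ d * (2 * S / (p + q + S)) ^ (-(d : ℝ) / 2) *
        Real.exp (-(1 / 2 * (q - p + S))) := by
  set a := p + q
  have haS : 0 < a + S := by nlinarith
  set c₀ := b / (a + S)
  set T := 2 * S / (a + S)
  set D := (a + S) * (c - c₀) ^ 2 / (2 * s)
  have hT : 0 < T := by positivity
  have hc₀ : c₀ ^ 2 = 1 - T := sq_div_add_eq_one_sub_div hS haS
  have hexponent : -(c ^ 2 * p + q - b * c) / s = -D + -(1 / 2 * (q - p + S)) := by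
    rw [sq_mul_add_sub_mul_eq hS haS hc]
    simp only [D, c₀, a]
    field_simp
    ring
  have hsD : 2 * s < T → T / (16 * s) ≤ D := by
    intro hsT
    have hgap : T / 4 ≤ c - c₀ :=
      div_four_le_sub_of_le_two_mul_sq_sub_sq hc0 (by nlinarith) (by nlinarith) hT.le
        (by rw [hc, hc₀]; linarith)
    have hT2 : (a + S) * T ^ 2 = 2 * S * T := by
      simp only [T]
      field_simp
    have hT_le_sq : 2 * T ≤ 16 * ((a + S) * (c - c₀) ^ 2) := by
      nlinarith [mul_le_mul_of_nonneg_left (pow_le_pow_left₀ (by positivity) hgap 2) haS.le]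
    rw [div_le_div_iff₀ (by positivity) (by positivity)]
    nlinarith [mul_le_mul_of_nonneg_left hT_le_sq hs.le]
  calc s ^ (-(d : ℝ) / 2) * Real.exp (-(c ^ 2 * p + q - b * c) / s)
      = s ^ (-(d : ℝ) / 2) * Real.exp (-D) * Real.exp (-(1 / 2 * (q - p + S))) := by
        rw [hexponent, Real.exp_add, mul_assoc]
    _ ≤ d ! * 16 ^ d * T ^ (-(d : ℝ) / 2) * Real.exp (-(1 / 2 * (q - p + S))) :=
        mul_le_mul_of_nonneg_right (rpow_neg_half_mul_exp_neg_le d hs hT (by positivity) hsD)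
          (Real.exp_nonneg _)

section InnerProductSpace

variable {E : Type*} [NormedAddCommGroup E] [InnerProductSpace ℝ E] {x y : E}

lemma norm_add_mul_norm_sub_sq (x y : E) :
    (‖x + y‖ * ‖x - y‖) ^ 2 = (‖x‖ ^ 2 + ‖y‖ ^ 2) ^ 2 - (2 * ⟪x, y⟫) ^ 2 := by
  rw [mul_pow, norm_add_sq_real, norm_sub_sq_real]
  ring

lemma sqrt_sq_sub_sq_eq_norm_add_mul_norm_sub (x y : E) :
    Real.sqrt ((‖x‖ ^ 2 + ‖y‖ ^ 2) ^ 2 - (2 * ⟪x, y⟫) ^ 2) = ‖x + y‖ * ‖x - y‖ := by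
  rw [← norm_add_mul_norm_sub_sq, Real.sqrt_sq (by positivity)]

lemma one_lt_norm_add_mul_norm_sub (hxy : 0 < ⟪x, y⟫) (h : min 1 (1 / ‖x‖) < ‖x - y‖) :
    1 < ‖x + y‖ * ‖x - y‖ := by
  have hx : 0 < ‖x‖ := norm_pos_iff.mpr fun hx => by simp [hx] at hxy
  have hsub : ‖x - y‖ < ‖x + y‖ := by
    rw [← sq_lt_sq₀ (norm_nonneg _) (norm_nonneg _), norm_add_sq_real, norm_sub_sq_real]
    linarith
  have hx_lt : ‖x‖ < ‖x + y‖ := by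
    rw [← sq_lt_sq₀ (norm_nonneg _) (norm_nonneg _), norm_add_sq_real]
    nlinarith [sq_nonneg ‖y‖]
  rcases le_or_gt ‖x‖ 1 with hx1 | hx1
  · rw [min_eq_left ((one_le_div hx).mpr hx1)] at h
    nlinarith
  · rw [min_eq_right ((div_le_one hx).mpr hx1.le), div_lt_iff₀ hx] at h
    nlinarith

end InnerProductSpace

/-- Estimate for the Ornstein–Uhlenbeck kernel on the global region when `b = 2⟨x,y⟩ > 0`:
`(πs)^{-d/2} exp(-|√(1-s)x - y|²/s) ≤ C_d t₀^{-d/2} e^{-u₀}`, where `a = |x|² + |y|²`,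
`b = 2⟨x,y⟩`, `t₀ = 2√(a² - b²)/(a + √(a² - b²))` and
`u₀ = (1/2)(|y|² - |x|² + |x+y||x-y|)`. -/
theorem ou_kernel_global_bound_b_pos (d : ℕ) (hd : 1 ≤ d) :
    ∃ C : ℝ, 0 < C ∧ ∀ s : ℝ, 0 < s → s < 1 →
      ∀ x y : EuclideanSpace ℝ (Fin d), 0 < ⟪x, y⟫ →
        (d : ℝ) * min 1 (1 / ‖x‖) < ‖x - y‖ →
        (Real.pi * s) ^ (-(d : ℝ) / 2) *
            Real.exp (-‖Real.sqrt (1 - s) • x - y‖ ^ 2 / s) ≤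
          C * (2 * Real.sqrt ((‖x‖ ^ 2 + ‖y‖ ^ 2) ^ 2 - (2 * ⟪x, y⟫) ^ 2) /
                ((‖x‖ ^ 2 + ‖y‖ ^ 2) +
                  Real.sqrt ((‖x‖ ^ 2 + ‖y‖ ^ 2) ^ 2 - (2 * ⟪x, y⟫) ^ 2))) ^
              (-(d : ℝ) / 2) *
            Real.exp (-(1 / 2 * (‖y‖ ^ 2 - ‖x‖ ^ 2 + ‖x + y‖ * ‖x - y‖))) := by
  refine ⟨d ! * 16 ^ d, by positivity, fun s hs hs1 x y hxy hreg => ?_⟩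
  have hmin : min 1 (1 / ‖x‖) < ‖x - y‖ :=
    lt_of_le_of_lt (le_mul_of_one_le_left (by positivity) (by exact_mod_cast hd)) hreg
  have hc : Real.sqrt (1 - s) ^ 2 = 1 - s := Real.sq_sqrt (by linarith)
  have hnorm : ‖Real.sqrt (1 - s) • x - y‖ ^ 2 =
      Real.sqrt (1 - s) ^ 2 * ‖x‖ ^ 2 + ‖y‖ ^ 2 - 2 * ⟪x, y⟫ * Real.sqrt (1 - s) := by
    rw [norm_sub_sq_real, norm_smul, real_inner_smul_left, mul_pow, Real.norm_eq_abs, sq_abs]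
    ring
  have hpi : Real.pi ^ (-(d : ℝ) / 2) ≤ 1 :=
    Real.rpow_le_one_of_one_le_of_nonpos (by linarith [Real.pi_gt_three])
      (by linarith [d.cast_nonneg (α := ℝ)])
  rw [sqrt_sq_sub_sq_eq_norm_add_mul_norm_sub, hnorm, Real.mul_rpow Real.pi_pos.le hs.le,
    mul_assoc]
  refine (mul_le_of_le_one_left (by positivity) hpi).trans ?_
  exact rpow_neg_half_mul_exp_neg_div_le d (by positivity)
    (one_lt_norm_add_mul_norm_sub hxy hmin)
    (norm_add_mul_norm_sub_sq x y) hs (Real.sqrt_nonneg _) hc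
end

section
/- Let p : ℝ^d → [1,∞) be measurable and suppose p(·) ∈ 𝒫^∞_{γ_d}(ℝ^d) with constants C_{γ_d} > 0 and p_∞ ≥ 1. Then for all x, y ∈ ℝ^d, | ( |y|²/p(y) − |x|²/p(x) ) − ( |y|² − |x|² )/p_∞ | ≤ 2 C_{γ_d}; consequently e^{−2C_{γ_d}} e^{(|y|² − |x|²)/p_∞} ≤ e^{|y|²/p(y) − |x|²/p(x)} ≤ e^{2C_{γ_d}} e^{(|y|² − |x|²)/p_∞}. -/
/-!
Since `|y|²/p(y) - |y|²/p_∞ = |y|² (p_∞ - p(y)) / (p(y) p_∞)` and `p(y) p_∞ ≥ 1`, the decay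
`|p(y) - p_∞| ≤ C/|y|²` exactly cancels the growth of `|y|²`, so each point contributes an error
of at most `C`; the two points together give `2C`, and exponentiating gives the comparison.
-/

lemma abs_div_sub_div_le_mul_abs_sub {a q r : ℝ} (ha : 0 ≤ a) (hq : 1 ≤ q) (hr : 1 ≤ r) :
    |a / q - a / r| ≤ a * |q - r| := by
  have hq0 : 0 < q := one_pos.trans_le hq
  have hr0 : 0 < r := one_pos.trans_le hr
  have hdiff : a / q - a / r = a * (r - q) / (q * r) := by field_simp
  rw [hdiff, abs_div, abs_mul, abs_of_nonneg ha, abs_of_pos (mul_pos hq0 hr0), abs_sub_comm]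
  exact div_le_self (by positivity) (one_le_mul_of_one_le_of_one_le hq hr)

lemma abs_sq_norm_div_sub_div_le {E : Type*} [NormedAddCommGroup E] {p : E → ℝ} {C pinf : ℝ}
    (h1p : ∀ x, 1 ≤ p x) (hC : 0 ≤ C) (hpinf : 1 ≤ pinf)
    (hdecay : ∀ x, x ≠ 0 → |p x - pinf| ≤ C / ‖x‖ ^ 2) (x : E) :
    |‖x‖ ^ 2 / p x - ‖x‖ ^ 2 / pinf| ≤ C := by
  rcases eq_or_ne x 0 with rfl | hx
  · simpa using hC
  have hnorm : 0 < ‖x‖ ^ 2 := by positivity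
  calc |‖x‖ ^ 2 / p x - ‖x‖ ^ 2 / pinf|
      ≤ ‖x‖ ^ 2 * |p x - pinf| := abs_div_sub_div_le_mul_abs_sub hnorm.le (h1p x) hpinf
    _ ≤ ‖x‖ ^ 2 * (C / ‖x‖ ^ 2) := mul_le_mul_of_nonneg_left (hdecay x hx) hnorm.le
    _ = C := mul_div_cancel₀ C hnorm.ne'

lemma abs_sub_sub_sub_le {u v u' v' C : ℝ} (hu : |u - u'| ≤ C) (hv : |v - v'| ≤ C) :
    |(u - v) - (u' - v')| ≤ 2 * C := by
  rw [abs_le] at *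
  constructor <;> linarith

lemma exp_le_exp_mul_of_abs_sub_le {s t c : ℝ} (h : |t - s| ≤ c) :
    Real.exp (-c) * Real.exp s ≤ Real.exp t ∧ Real.exp t ≤ Real.exp c * Real.exp s := by
  rw [← Real.exp_add, ← Real.exp_add, Real.exp_le_exp, Real.exp_le_exp]
  rw [abs_le] at h
  constructor <;> linarith

theorem exp_ratio_comparable_general (d : ℕ)
    (p : EuclideanSpace ℝ (Fin d) → ℝ)
    (h1p : ∀ x, 1 ≤ p x)
    (Cγ pinf : ℝ) (hCγ : 0 < Cγ) (hpinf : 1 ≤ pinf)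
    (hPγ : ∀ x : EuclideanSpace ℝ (Fin d), x ≠ 0 → |p x - pinf| ≤ Cγ / ‖x‖ ^ 2) :
    ∀ x y : EuclideanSpace ℝ (Fin d),
      |(‖y‖ ^ 2 / p y - ‖x‖ ^ 2 / p x) - (‖y‖ ^ 2 - ‖x‖ ^ 2) / pinf| ≤ 2 * Cγ ∧
      Real.exp (-(2 * Cγ)) * Real.exp ((‖y‖ ^ 2 - ‖x‖ ^ 2) / pinf) ≤
        Real.exp (‖y‖ ^ 2 / p y - ‖x‖ ^ 2 / p x) ∧
      Real.exp (‖y‖ ^ 2 / p y - ‖x‖ ^ 2 / p x) ≤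
        Real.exp (2 * Cγ) * Real.exp ((‖y‖ ^ 2 - ‖x‖ ^ 2) / pinf) := by
  intro x y
  have hpoint := abs_sq_norm_div_sub_div_le h1p hCγ.le hpinf hPγ
  have hbound : |(‖y‖ ^ 2 / p y - ‖x‖ ^ 2 / p x) - (‖y‖ ^ 2 - ‖x‖ ^ 2) / pinf| ≤ 2 * Cγ := by
    rw [sub_div]
    exact abs_sub_sub_sub_le (hpoint y) (hpoint x)
  exact ⟨hbound, exp_le_exp_mul_of_abs_sub_le hbound⟩

/-- If `p(·) ∈ 𝒫^∞_{γ_d}(ℝ^d)` with constants `C_{γ_d} > 0` and `p_∞ ≥ 1`, then for all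
`x, y`, `|(|y|²/p(y) - |x|²/p(x)) - (|y|² - |x|²)/p_∞| ≤ 2C_{γ_d}`, and consequently
`e^{-2C_{γ_d}} e^{(|y|²-|x|²)/p_∞} ≤ e^{|y|²/p(y) - |x|²/p(x)} ≤ e^{2C_{γ_d}} e^{(|y|²-|x|²)/p_∞}`. -/
theorem exp_ratio_comparable (d : ℕ)
    (p : EuclideanSpace ℝ (Fin d) → ℝ) (hpmeas : Measurable p)
    (h1p : ∀ x, 1 ≤ p x)
    (Cγ pinf : ℝ) (hCγ : 0 < Cγ) (hpinf : 1 ≤ pinf)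
    (hPγ : ∀ x : EuclideanSpace ℝ (Fin d), x ≠ 0 → |p x - pinf| ≤ Cγ / ‖x‖ ^ 2) :
    ∀ x y : EuclideanSpace ℝ (Fin d),
      |(‖y‖ ^ 2 / p y - ‖x‖ ^ 2 / p x) - (‖y‖ ^ 2 - ‖x‖ ^ 2) / pinf| ≤ 2 * Cγ ∧
      Real.exp (-(2 * Cγ)) * Real.exp ((‖y‖ ^ 2 - ‖x‖ ^ 2) / pinf) ≤
        Real.exp (‖y‖ ^ 2 / p y - ‖x‖ ^ 2 / p x) ∧
      Real.exp (‖y‖ ^ 2 / p y - ‖x‖ ^ 2 / p x) ≤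
        Real.exp (2 * Cγ) * Real.exp ((‖y‖ ^ 2 - ‖x‖ ^ 2) / pinf) :=
  exp_ratio_comparable_general d p h1p Cγ pinf hCγ hpinf hPγ
end
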